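/- Let k ≥ 1 and let ℓ ∉ {2, 3} be prime. If 3 ∣ k, then for every m ≥ 1, if applying the modified mod-3 Hecke operator T'_ℓ a total of m times to the mod-3 reduction of D_2^{k/3} yields 0 in (ℤ/3ℤ)[[q]], then applying T'_ℓ a total of m times to the mod-3 reduction of D_2^k also yields 0. If 2 ∣ k, then for every m ≥ 1, if applying T'_ℓ a total of m times to the mod-3 reduction of Δ^{k/2} yields 0, then applying T'_ℓ a total of m times to the mod-3 reduction of D_2^k also yields 0. That is, N_ℓ(D_2^k, 3) ≤ N_ℓ(D_2^{k/3}, 3) when 3 ∣ k, and N_ℓ(D_2^k, 3) ≤ N_ℓ(Δ^{k/2}, 3) when 2 ∣ k. -/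

import Mathlib

noncomputable def Delta : PowerSeries ℤ :=
  PowerSeries.mk fun n => PowerSeries.coeff (R := ℤ) n
    (PowerSeries.X * ∏ m ∈ Finset.range n, (1 - PowerSeries.X ^ (m + 1)) ^ 24)

noncomputable def D2 : PowerSeries ℤ :=
  PowerSeries.mk fun n => PowerSeries.coeff (R := ℤ) n
    (PowerSeries.X * ∏ m ∈ Finset.range n, (1 - PowerSeries.X ^ (2 * (m + 1))) ^ 12)

noncomputable def heckeT (p ℓ : ℕ) (f : PowerSeries (ZMod p)) : PowerSeries (ZMod p) :=
  PowerSeries.mk fun n =>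
    PowerSeries.coeff (R := ZMod p) (ℓ * n) f +
      (ℓ : ZMod p)⁻¹ * (if ℓ ∣ n then PowerSeries.coeff (R := ZMod p) (n / ℓ) f else 0)

noncomputable def heckeT' (p ℓ : ℕ) (f : PowerSeries (ZMod p)) : PowerSeries (ZMod p) :=
  if ℓ % p = 1 then heckeT p ℓ f - 2 * f else heckeT p ℓ f

/-!
Write `V_r = PowerSeries.expand r` for the substitution `q ↦ q^r`. The mod-3 reduction of `D_2^k`
is `V_r g` with `g` the reduction of `D_2^{k/3}` (`r = 3`: cubing is the Frobenius in
characteristic 3) or of `Δ^{k/2}` (`r = 2`: `D_2^2 = η(2z)^24 = Δ(q^2)`). For `ℓ` prime to `r`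
the Hecke operator `T_ℓ`, hence also `T'_ℓ`, commutes with `V_r`, so
`T'_ℓ^m (V_r g) = V_r (T'_ℓ^m g)` vanishes whenever `T'_ℓ^m g` does.
-/

open PowerSeries

theorem PowerSeries.map_frobenius_expand {R : Type*} [CommRing R] (p : ℕ) (hp : p ≠ 0)
    [ExpChar R p] (f : R⟦X⟧) : map (frobenius R p) (expand p hp f) = f ^ p :=
  MvPowerSeries.map_frobenius_expand p hp

theorem ZMod.powerSeries_pow_eq_expand (p : ℕ) [hp : Fact p.Prime] (f : (ZMod p)⟦X⟧) :
    f ^ p = expand p hp.out.ne_zero f := by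
  simpa [ZMod.frobenius_zmod] using (map_frobenius_expand p hp.out.ne_zero f).symm

section TruncatedProducts

variable {R : Type*} [CommRing R]

theorem PowerSeries.eq_of_forall_X_pow_succ_dvd_sub {f g : R⟦X⟧}
    (h : ∀ N, X ^ (N + 1) ∣ f - g) : f = g := by
  ext n
  simpa [sub_eq_zero] using X_pow_dvd_iff.mp (h n) n n.lt_succ_self

theorem X_pow_succ_dvd_prod_range_sub {a : ℕ → R⟦X⟧} (ha : ∀ m, X ^ (m + 1) ∣ a m - 1)
    {n N : ℕ} (hnN : n ≤ N) :
    X ^ (n + 1) ∣ ∏ m ∈ Finset.range N, a m - ∏ m ∈ Finset.range n, a m := by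
  induction N, hnN using Nat.le_induction with
  | base => simp
  | succ N hnN ih =>
    have hsplit : ∏ m ∈ Finset.range (N + 1), a m - ∏ m ∈ Finset.range n, a m =
        (∏ m ∈ Finset.range N, a m) * (a N - 1) +
          (∏ m ∈ Finset.range N, a m - ∏ m ∈ Finset.range n, a m) := by
      rw [Finset.prod_range_succ]; ring
    rw [hsplit]
    exact dvd_add ((pow_dvd_pow X (by omega)).trans ((ha N).mul_left _)) ih

theorem X_pow_dvd_one_sub_X_pow_pow_sub_one (c e : ℕ) :
    (X : R⟦X⟧) ^ c ∣ (1 - X ^ c) ^ e - 1 := by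
  have h := sub_dvd_pow_sub_pow (1 - X ^ c : R⟦X⟧) 1 e
  rwa [one_pow, sub_sub_cancel_left, neg_dvd] at h

theorem X_pow_succ_dvd_mk_coeff_sub {P : ℕ → R⟦X⟧}
    (hP : ∀ n N, n ≤ N → X ^ (n + 1) ∣ P N - P n) (N : ℕ) :
    X ^ (N + 1) ∣ mk (fun n => coeff n (P n)) - P N := by
  refine X_pow_dvd_iff.mpr fun n hn => ?_
  rw [map_sub, coeff_mk, sub_eq_zero]
  exact (sub_eq_zero.mp (X_pow_dvd_iff.mp (hP n N (by omega)) n n.lt_succ_self)).symm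

noncomputable def etaPartialProduct (c : ℕ → ℕ) (e N : ℕ) : R⟦X⟧ :=
  X * ∏ m ∈ Finset.range N, (1 - X ^ c m) ^ e

theorem X_pow_succ_dvd_etaPartialProduct_sub {c : ℕ → ℕ} (hc : ∀ m, m + 1 ≤ c m) (e : ℕ)
    {n N : ℕ} (hnN : n ≤ N) :
    X ^ (n + 1) ∣ etaPartialProduct (R := R) c e N - etaPartialProduct c e n := by
  rw [etaPartialProduct, etaPartialProduct, ← mul_sub]
  refine Dvd.dvd.mul_left (X_pow_succ_dvd_prod_range_sub (fun m => ?_) hnN) X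
  exact (pow_dvd_pow X (hc m)).trans (X_pow_dvd_one_sub_X_pow_pow_sub_one _ _)

end TruncatedProducts

theorem X_pow_succ_dvd_Delta_sub (N : ℕ) :
    X ^ (N + 1) ∣ Delta - etaPartialProduct (· + 1) 24 N :=
  X_pow_succ_dvd_mk_coeff_sub
    (fun _ _ => X_pow_succ_dvd_etaPartialProduct_sub (fun _ => le_rfl) 24) N

theorem X_pow_succ_dvd_D2_sub (N : ℕ) :
    X ^ (N + 1) ∣ D2 - etaPartialProduct (fun m => 2 * (m + 1)) 12 N :=
  X_pow_succ_dvd_mk_coeff_sub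
    (fun _ _ => X_pow_succ_dvd_etaPartialProduct_sub (fun _ => by omega) 12) N

theorem expand_two_etaPartialProduct (N : ℕ) :
    expand 2 two_ne_zero (etaPartialProduct (R := ℤ) (· + 1) 24 N) =
      etaPartialProduct (fun m => 2 * (m + 1)) 12 N ^ 2 := by
  simp only [etaPartialProduct, map_mul, map_prod, map_pow, map_sub, map_one, expand_X, mul_pow,
    ← Finset.prod_pow, ← pow_mul]

theorem D2_sq : D2 ^ 2 = expand 2 two_ne_zero Delta := by
  refine eq_of_forall_X_pow_succ_dvd_sub fun N => ?_
  set P := etaPartialProduct (R := ℤ) (· + 1) 24 N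
  set Q := etaPartialProduct (R := ℤ) (fun m => 2 * (m + 1)) 12 N
  have hD : X ^ (N + 1) ∣ D2 ^ 2 - Q ^ 2 := by
    rw [sq_sub_sq]; exact (X_pow_succ_dvd_D2_sub N).mul_left _
  have hΔ : X ^ (N + 1) ∣ expand 2 two_ne_zero Delta - expand 2 two_ne_zero P := by
    have h := map_dvd (expand 2 two_ne_zero) (X_pow_succ_dvd_Delta_sub N)
    rw [map_pow, expand_X, map_sub] at h
    exact (pow_dvd_pow_of_dvd (dvd_pow_self X two_ne_zero) _).trans h
  have hsplit : D2 ^ 2 - expand 2 two_ne_zero Delta =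
      (D2 ^ 2 - Q ^ 2) - (expand 2 two_ne_zero Delta - expand 2 two_ne_zero P) := by
    rw [expand_two_etaPartialProduct]; ring
  rw [hsplit]
  exact dvd_sub hD hΔ

theorem heckeT_expand (p : ℕ) {r ℓ : ℕ} (hr : r ≠ 0) (hrℓ : r.Coprime ℓ)
    (f : PowerSeries (ZMod p)) :
    heckeT p ℓ (expand r hr f) = expand r hr (heckeT p ℓ f) := by
  ext n
  simp only [heckeT, coeff_mk]
  by_cases hrn : r ∣ n
  · obtain ⟨c, rfl⟩ := hrn
    rw [coeff_expand_mul, coeff_mk, Nat.mul_left_comm, coeff_expand_mul]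
    simp only [hrℓ.symm.dvd_mul_left]
    split_ifs with hℓc
    · rw [Nat.mul_div_assoc _ hℓc, coeff_expand_mul]
    · rfl
  · have hrℓn : ¬ r ∣ ℓ * n := fun h => hrn (hrℓ.dvd_of_dvd_mul_left h)
    rw [coeff_expand_of_not_dvd _ _ _ hrn, coeff_expand_of_not_dvd _ _ _ hrℓn, zero_add]
    split_ifs with hℓn
    · have hrnℓ : ¬ r ∣ n / ℓ := fun h => hrn (h.trans (Nat.div_dvd_of_dvd hℓn))
      rw [coeff_expand_of_not_dvd _ _ _ hrnℓ, mul_zero]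
    · rw [mul_zero]

theorem heckeT'_expand (p : ℕ) {r ℓ : ℕ} (hr : r ≠ 0) (hrℓ : r.Coprime ℓ)
    (f : PowerSeries (ZMod p)) :
    heckeT' p ℓ (expand r hr f) = expand r hr (heckeT' p ℓ f) := by
  unfold heckeT'
  split_ifs <;> simp [heckeT_expand p hr hrℓ, map_ofNat]

theorem iterate_heckeT'_expand_eq_zero (p : ℕ) {r ℓ : ℕ} (hr : r ≠ 0)
    (hrℓ : r.Coprime ℓ) {f : PowerSeries (ZMod p)} {m : ℕ} (hf : (heckeT' p ℓ)^[m] f = 0) :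
    (heckeT' p ℓ)^[m] (expand r hr f) = 0 := by
  have hcomm : Function.Commute (heckeT' p ℓ) (expand r hr) := heckeT'_expand p hr hrℓ
  rw [(hcomm.iterate_left m).eq, hf, map_zero]

theorem stmt5_general (k : ℕ)
    (ℓ : ℕ) (hℓ : Nat.Prime ℓ) (h2 : ℓ ≠ 2) (h3 : ℓ ≠ 3) :
    (3 ∣ k → ∀ m : ℕ, 1 ≤ m →
      (heckeT' 3 ℓ)^[m]
        (PowerSeries.map (Int.castRingHom (ZMod 3)) (D2 ^ (k / 3))) = 0 →
      (heckeT' 3 ℓ)^[m]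
        (PowerSeries.map (Int.castRingHom (ZMod 3)) (D2 ^ k)) = 0) ∧
    (2 ∣ k → ∀ m : ℕ, 1 ≤ m →
      (heckeT' 3 ℓ)^[m]
        (PowerSeries.map (Int.castRingHom (ZMod 3)) (Delta ^ (k / 2))) = 0 →
      (heckeT' 3 ℓ)^[m]
        (PowerSeries.map (Int.castRingHom (ZMod 3)) (D2 ^ k)) = 0) := by
  have hcop (r : ℕ) (hr : r.Prime) (hrℓ : ℓ ≠ r) : r.Coprime ℓ :=
    (Nat.coprime_primes hr hℓ).mpr hrℓ.symm
  refine ⟨fun h3k m _ hzero => ?_, fun h2k m _ hzero => ?_⟩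
  · have hD : PowerSeries.map (Int.castRingHom (ZMod 3)) (D2 ^ k) =
        expand 3 three_ne_zero (PowerSeries.map (Int.castRingHom (ZMod 3)) (D2 ^ (k / 3))) := by
      have : Fact (Nat.Prime 3) := ⟨Nat.prime_three⟩
      rw [← ZMod.powerSeries_pow_eq_expand, ← map_pow, ← pow_mul, Nat.div_mul_cancel h3k]
    rw [hD]
    exact iterate_heckeT'_expand_eq_zero 3 _ (hcop 3 Nat.prime_three h3) hzero
  · have hD : D2 ^ k = expand 2 two_ne_zero (Delta ^ (k / 2)) := by
      rw [map_pow, ← D2_sq, ← pow_mul, Nat.mul_div_cancel' h2k]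
    rw [hD, map_expand]
    exact iterate_heckeT'_expand_eq_zero 3 _ (hcop 2 Nat.prime_two h2) hzero

theorem stmt5 (k : ℕ) (hk : 1 ≤ k)
    (ℓ : ℕ) (hℓ : Nat.Prime ℓ) (h2 : ℓ ≠ 2) (h3 : ℓ ≠ 3) :
    (3 ∣ k → ∀ m : ℕ, 1 ≤ m →
      (heckeT' 3 ℓ)^[m]
        (PowerSeries.map (Int.castRingHom (ZMod 3)) (D2 ^ (k / 3))) = 0 →
      (heckeT' 3 ℓ)^[m]
        (PowerSeries.map (Int.castRingHom (ZMod 3)) (D2 ^ k)) = 0) ∧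
    (2 ∣ k → ∀ m : ℕ, 1 ≤ m →
      (heckeT' 3 ℓ)^[m]
        (PowerSeries.map (Int.castRingHom (ZMod 3)) (Delta ^ (k / 2))) = 0 →
      (heckeT' 3 ℓ)^[m]
        (PowerSeries.map (Int.castRingHom (ZMod 3)) (D2 ^ k)) = 0) :=
  stmt5_general k ℓ hℓ h2 h3
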